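/- arXiv:2003.06855 — 2 statements merged into one kernel-verified Lean document; each statement's English description precedes it below -/
import Mathlib

section
/- Suppose the 2n×2n symplectic matrices S_k(λ) (k = 0,…,N) each satisfy Ψ(S_k(λ)) ≥ 0 for all λ, and suppose Z₀(λ) is a differentiable symplectic family with Ψ(Z₀(λ)) ≥ 0 for all λ. Define recursively Z_{k+1}(λ) := S_k(λ) Z_k(λ). Then Ψ(Z_k(λ)) ≥ 0 for all λ and all k = 0,…,N+1. -/
open Matrix
noncomputable section

/-- The standard symplectic matrix `J = [[0, I], [-I, 0]]`. -/
def Jmat (k : Type*) [Fintype k] [DecidableEq k] : Matrix (k ⊕ k) (k ⊕ k) ℝ :=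
  fromBlocks 0 1 (-1) 0

/-- A matrix `S` is symplectic if `Sᵀ J S = J`. -/
def IsSymplectic {k : Type*} [Fintype k] [DecidableEq k]
    (S : Matrix (k ⊕ k) (k ⊕ k) ℝ) : Prop :=
  Sᵀ * Jmat k * S = Jmat k

/-- `S'` is the (entrywise) derivative family of the matrix family `S`. -/
def HasMatDeriv {k m : Type*} (S S' : ℝ → Matrix k m ℝ) : Prop :=
  ∀ (l : ℝ) (i : k) (j : m), HasDerivAt (fun t => S t i j) (S' l i j) l

/-- `Ψ(S(λ)) = Jᵀ S'(λ) S(λ)⁻¹`, where `S'` is a derivative family of `S`. -/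
def Psi {k : Type*} [Fintype k] [DecidableEq k]
    (S S' : ℝ → Matrix (k ⊕ k) (k ⊕ k) ℝ) (l : ℝ) : Matrix (k ⊕ k) (k ⊕ k) ℝ :=
  (Jmat k)ᵀ * S' l * (S l)⁻¹

/-!
Differentiating `Z_{k+1} = S_k Z_k` and using `(S Z)⁻¹ = Z⁻¹ S⁻¹` together with the symplectic
identity `Jᵀ S = (S⁻¹)ᵀ Jᵀ` gives `Ψ(S Z) = Ψ(S) + (S⁻¹)ᵀ Ψ(Z) S⁻¹`. A sum of a positive
semidefinite matrix and a congruent copy of another is positive semidefinite, so positivity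
propagates along the recursion by induction on `k`.
-/

namespace HasMatDeriv

variable {ι κ μ : Type*}

theorem unique {A A' A'' : ℝ → Matrix ι κ ℝ} (h' : HasMatDeriv A A') (h'' : HasMatDeriv A A'') :
    A' = A'' :=
  funext fun l => Matrix.ext fun i j => (h' l i j).unique (h'' l i j)

theorem mul [Fintype κ] {A A' : ℝ → Matrix ι κ ℝ} {B B' : ℝ → Matrix κ μ ℝ}
    (hA : HasMatDeriv A A') (hB : HasMatDeriv B B') :
    HasMatDeriv (fun t => A t * B t) (fun t => A' t * B t + A t * B' t) := by
  intro l i j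
  simpa only [mul_apply, Matrix.add_apply, Finset.sum_add_distrib] using
    HasDerivAt.fun_sum fun m _ => (hA l i m).fun_mul (hB l m j)

end HasMatDeriv

section Symplectic

variable {k : Type*} [Fintype k] [DecidableEq k] {S Z : Matrix (k ⊕ k) (k ⊕ k) ℝ}

theorem Jmat_transpose_mul_self : (Jmat k)ᵀ * Jmat k = 1 := by
  simp [Jmat, fromBlocks_transpose, fromBlocks_multiply, ← fromBlocks_one]

namespace IsSymplectic

theorem isUnit_det (hS : IsSymplectic S) : IsUnit S.det :=
  isUnit_det_of_left_inverse (B := (Jmat k)ᵀ * Sᵀ * Jmat k) <| by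
    rw [Matrix.mul_assoc, Matrix.mul_assoc, ← Matrix.mul_assoc Sᵀ, hS, Jmat_transpose_mul_self]

theorem mul (hS : IsSymplectic S) (hZ : IsSymplectic Z) : IsSymplectic (S * Z) := by
  unfold IsSymplectic at *
  calc (S * Z)ᵀ * Jmat k * (S * Z) = Zᵀ * (Sᵀ * Jmat k * S) * Z := by
        simp only [transpose_mul, Matrix.mul_assoc]
    _ = Jmat k := by rw [hS, hZ]

theorem Jmat_transpose_mul (hS : IsSymplectic S) : (Jmat k)ᵀ * S = S⁻¹ᵀ * (Jmat k)ᵀ := by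
  have h : Sᵀ * Jmat k = Jmat k * S⁻¹ :=
    calc Sᵀ * Jmat k = Sᵀ * Jmat k * S * S⁻¹ := by
          rw [Matrix.mul_assoc _ S, mul_nonsing_inv _ hS.isUnit_det, Matrix.mul_one]
      _ = Jmat k * S⁻¹ := by rw [hS]
  rw [← transpose_mul, ← h, transpose_mul, transpose_transpose]

end IsSymplectic

theorem psi_mul_eq {S' Z' : Matrix (k ⊕ k) (k ⊕ k) ℝ} (hS : IsSymplectic S) (hZ : IsSymplectic Z) :
    (Jmat k)ᵀ * (S' * Z + S * Z') * (S * Z)⁻¹ =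
      (Jmat k)ᵀ * S' * S⁻¹ + S⁻¹ᵀ * ((Jmat k)ᵀ * Z' * Z⁻¹) * S⁻¹ := by
  rw [Matrix.mul_inv_rev, Matrix.mul_add, Matrix.add_mul]
  congr 1
  · calc (Jmat k)ᵀ * (S' * Z) * (Z⁻¹ * S⁻¹) = (Jmat k)ᵀ * S' * (Z * Z⁻¹) * S⁻¹ := by
          simp only [Matrix.mul_assoc]
      _ = (Jmat k)ᵀ * S' * S⁻¹ := by rw [mul_nonsing_inv _ hZ.isUnit_det, Matrix.mul_one]
  · calc (Jmat k)ᵀ * (S * Z') * (Z⁻¹ * S⁻¹) = (Jmat k)ᵀ * S * Z' * Z⁻¹ * S⁻¹ := by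
          simp only [Matrix.mul_assoc]
      _ = S⁻¹ᵀ * ((Jmat k)ᵀ * Z' * Z⁻¹) * S⁻¹ := by
          rw [hS.Jmat_transpose_mul]; simp only [Matrix.mul_assoc]

theorem posSemidef_psi_mul {S S' Z Z' : ℝ → Matrix (k ⊕ k) (k ⊕ k) ℝ} {l : ℝ}
    (hS : IsSymplectic (S l)) (hZ : IsSymplectic (Z l))
    (hSpos : (Psi S S' l).PosSemidef) (hZpos : (Psi Z Z' l).PosSemidef) :
    (Psi (fun t => S t * Z t) (fun t => S' t * Z t + S t * Z' t) l).PosSemidef := by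
  rw [Psi, psi_mul_eq hS hZ]
  exact hSpos.add <| by
    simpa only [Psi, conjTranspose_eq_transpose_of_trivial] using
      hZpos.conjTranspose_mul_mul_same (S l)⁻¹

end Symplectic

/-- if `Ψ(S_k(λ)) ≥ 0` for all `k, λ`, `Ψ(Z₀(λ)) ≥ 0`, and
`Z_{k+1}(λ) = S_k(λ) Z_k(λ)`, then `Ψ(Z_k(λ)) ≥ 0` for all `k = 0, …, N+1` and all `λ`. -/
theorem statement7 (n N : ℕ)
    (S S' : Fin (N + 1) → ℝ → Matrix (Fin n ⊕ Fin n) (Fin n ⊕ Fin n) ℝ)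
    (Z Z' : Fin (N + 2) → ℝ → Matrix (Fin n ⊕ Fin n) (Fin n ⊕ Fin n) ℝ)
    (hS : ∀ k l, IsSymplectic (S k l))
    (hdS : ∀ k, HasMatDeriv (S k) (S' k))
    (hSpos : ∀ k l, (Psi (S k) (S' k) l).PosSemidef)
    (hZ0 : ∀ l, IsSymplectic (Z 0 l))
    (hdZ : ∀ k, HasMatDeriv (Z k) (Z' k))
    (hZ0pos : ∀ l, (Psi (Z 0) (Z' 0) l).PosSemidef)
    (hrec : ∀ (k : Fin (N + 1)) (l : ℝ), Z k.succ l = S k l * Z k.castSucc l) :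
    ∀ (k : Fin (N + 2)) (l : ℝ), (Psi (Z k) (Z' k) l).PosSemidef := by
  have hZ (k : Fin (N + 1)) : Z k.succ = fun t => S k t * Z k.castSucc t := funext (hrec k)
  have hZ' (k : Fin (N + 1)) :
      Z' k.succ = fun t => S' k t * Z k.castSucc t + S k t * Z' k.castSucc t :=
    (hZ k ▸ hdZ k.succ).unique ((hdS k).mul (hdZ k.castSucc))
  have hZsymp : ∀ k l, IsSymplectic (Z k l) :=
    Fin.induction hZ0 fun k ih l => hrec k l ▸ (hS k l).mul (ih l)
  refine Fin.induction hZ0pos fun k ih l => ?_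
  rw [hZ k, hZ' k]
  exact posSemidef_psi_mul (hS k l) (hZsymp k.castSucc l) (hSpos k l) (ih l)
end
end

section
/- Let W(λ) be a differentiable 2n×2n symplectic family and Ŵ a fixed symplectic matrix. Define the 4n×4n matrices Ẑ(λ) = R⁻¹{I, W(λ)Ŵ⁻¹}R and 𝒵(λ) = R⁻¹{I, W(λ)}, where {I, M} is the 4n×4n symplectic embedding of M with blocks arranged as (I 0 0 0; 0 A 0 B; 0 0 I 0; 0 C 0 D) for M = (A B; C D), and R = (1/√2)(0 −I I 0; 0 I I 0; −I 0 0 −I; −I 0 0 I). Then R is symplectic and orthogonal, {I,W(λ)}, 𝒵(λ), Ẑ(λ) are symplectic, and if Ψ(W(λ)) ≥ 0 then Ψ(𝒵(λ)) ≥ 0 and Ψ(Ẑ(λ)) ≥ 0. -/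
open Matrix
noncomputable section

/-- The `4n×4n` symplectic embedding `{I, M}` of `M = (A B; C D)`, with rows/columns
ordered as `(I 0 0 0; 0 A 0 B; 0 0 I 0; 0 C 0 D)`. -/
def embed {k : Type*} [Fintype k] [DecidableEq k]
    (M : Matrix (k ⊕ k) (k ⊕ k) ℝ) : Matrix ((k ⊕ k) ⊕ (k ⊕ k)) ((k ⊕ k) ⊕ (k ⊕ k)) ℝ :=
  fromBlocks (fromBlocks 1 0 0 M.toBlocks₁₁) (fromBlocks 0 0 0 M.toBlocks₁₂)
             (fromBlocks 0 0 0 M.toBlocks₂₁) (fromBlocks 1 0 0 M.toBlocks₂₂)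

/-- The derivative of `{I, M(λ)}` when `M'` is the derivative of `M`, i.e. the embedding
`(0 0 0 0; 0 A' 0 B'; 0 0 0 0; 0 C' 0 D')`. -/
def embedDer {k : Type*} [Fintype k] [DecidableEq k]
    (M' : Matrix (k ⊕ k) (k ⊕ k) ℝ) : Matrix ((k ⊕ k) ⊕ (k ⊕ k)) ((k ⊕ k) ⊕ (k ⊕ k)) ℝ :=
  fromBlocks (fromBlocks 0 0 0 M'.toBlocks₁₁) (fromBlocks 0 0 0 M'.toBlocks₁₂)
             (fromBlocks 0 0 0 M'.toBlocks₂₁) (fromBlocks 0 0 0 M'.toBlocks₂₂)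

/-- The matrix `R = (1/√2)(0 −I I 0; 0 I I 0; −I 0 0 −I; −I 0 0 I)`. -/
def Rmat (k : Type*) [Fintype k] [DecidableEq k] :
    Matrix ((k ⊕ k) ⊕ (k ⊕ k)) ((k ⊕ k) ⊕ (k ⊕ k)) ℝ :=
  (Real.sqrt 2)⁻¹ •
    fromBlocks (fromBlocks 0 (-1) 0 1) (fromBlocks 1 0 1 0)
               (fromBlocks (-1) 0 (-1) 0) (fromBlocks 0 (-1) 0 1)

/-!
Left multiplication of a family by the inverse of a constant symplectic matrix `R` turns `Ψ`
into the congruent matrix `Rᵀ Ψ R`, right multiplication by a constant invertible matrix leaves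
`Ψ` unchanged, and `Ψ({I, W}) = {0, Ψ(W)}`. Congruence and the embedding `{0, ·}` preserve
positive semidefiniteness, so `Ψ(𝒵) = Rᵀ {0, Ψ(W)} R` and
`Ψ(Ẑ) = Rᵀ {0, Ψ(W Ŵ⁻¹)} R = Rᵀ {0, Ψ(W)} R` are positive semidefinite.
-/

lemma Matrix.PosSemidef.fromBlocks_zero_zero_zero {m n R : Type*} [Fintype m] [Fintype n]
    [DecidableEq n] [CommRing R] [PartialOrder R] [StarRing R] [StarOrderedRing R]
    {D : Matrix n n R} (hD : D.PosSemidef) :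
    (fromBlocks (0 : Matrix m m R) 0 0 D).PosSemidef := by
  have h := hD.conjTranspose_mul_mul_same (fromCols (0 : Matrix n m R) (1 : Matrix n n R))
  rw [conjTranspose_fromCols_eq_fromRows_conjTranspose, fromRows_mul, fromRows_mul_fromCols] at h
  simpa using h

section Symplectic

variable {k : Type*} [Fintype k] [DecidableEq k]

lemma Jmat_transpose : (Jmat k)ᵀ = -Jmat k := by
  rw [Jmat, fromBlocks_transpose, fromBlocks_neg]
  simp

lemma Jmat_mul_self : Jmat k * Jmat k = -1 := by
  rw [Jmat, fromBlocks_multiply, ← fromBlocks_one, fromBlocks_neg]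
  simp

lemma IsSymplectic.isUnit_det_s18 {S : Matrix (k ⊕ k) (k ⊕ k) ℝ} (h : IsSymplectic S) :
    IsUnit S.det := by
  refine isUnit_det_of_left_inverse (B := -(Jmat k * Sᵀ * Jmat k)) ?_
  calc -(Jmat k * Sᵀ * Jmat k) * S = -(Jmat k * (Sᵀ * Jmat k * S)) := by noncomm_ring
    _ = 1 := by rw [h, Jmat_mul_self, neg_neg]

lemma IsSymplectic.mul_s18 {S T : Matrix (k ⊕ k) (k ⊕ k) ℝ} (hS : IsSymplectic S)
    (hT : IsSymplectic T) : IsSymplectic (S * T) := by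
  unfold IsSymplectic at *
  calc (S * T)ᵀ * Jmat k * (S * T) = Tᵀ * (Sᵀ * Jmat k * S) * T := by
        rw [transpose_mul]; noncomm_ring
    _ = Jmat k := by rw [hS, hT]

lemma IsSymplectic.inv {S : Matrix (k ⊕ k) (k ⊕ k) ℝ} (h : IsSymplectic S) :
    IsSymplectic S⁻¹ := by
  have hS : S * S⁻¹ = 1 := mul_nonsing_inv _ h.isUnit_det_s18
  unfold IsSymplectic at *
  calc S⁻¹ᵀ * Jmat k * S⁻¹ = S⁻¹ᵀ * (Sᵀ * Jmat k * S) * S⁻¹ := by rw [h]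
    _ = (S * S⁻¹)ᵀ * Jmat k * (S * S⁻¹) := by rw [transpose_mul]; noncomm_ring
    _ = Jmat k := by rw [hS, transpose_one, Matrix.one_mul, Matrix.mul_one]

lemma IsSymplectic.Jmat_transpose_mul_inv {S : Matrix (k ⊕ k) (k ⊕ k) ℝ}
    (h : IsSymplectic S) : (Jmat k)ᵀ * S⁻¹ = Sᵀ * (Jmat k)ᵀ := by
  calc (Jmat k)ᵀ * S⁻¹ = -(Sᵀ * Jmat k * (S * S⁻¹)) := by
        rw [← Matrix.mul_assoc, h, Jmat_transpose, Matrix.neg_mul]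
    _ = Sᵀ * (Jmat k)ᵀ := by
        rw [mul_nonsing_inv _ h.isUnit_det_s18, Matrix.mul_one, Jmat_transpose, Matrix.mul_neg]

lemma Rmat_transpose_mul_self : (Rmat k)ᵀ * Rmat k = 1 := by
  ext ((i | i) | (i | i)) ((j | j) | (j | j)) <;>
    simp [Rmat, mul_apply, fromBlocks, one_apply, Fintype.sum_sum_type,
      TsirelsonInequality.sqrt_two_inv_mul_self] <;>
    split_ifs <;> grind

lemma isSymplectic_Rmat : IsSymplectic (Rmat k) := by
  unfold IsSymplectic
  ext ((i | i) | (i | i)) ((j | j) | (j | j)) <;>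
    simp [Jmat, Rmat, mul_apply, fromBlocks, one_apply, Fintype.sum_sum_type,
      TsirelsonInequality.sqrt_two_inv_mul_self] <;>
    split_ifs <;> grind

/-- Undoing the interleaved row and column order of `{I, M}` makes it block diagonal. -/
local notation "σ" => Equiv.sumSumSumComm k k k k

lemma embed_eq_submatrix (M : Matrix (k ⊕ k) (k ⊕ k) ℝ) :
    embed M = (fromBlocks 1 0 0 M).submatrix σ σ := by
  ext ((i | i) | (i | i)) ((j | j) | (j | j)) <;>
    simp [embed, fromBlocks, toBlocks₁₁, toBlocks₁₂, toBlocks₂₁, toBlocks₂₂, one_apply]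

lemma embedDer_eq_submatrix (M : Matrix (k ⊕ k) (k ⊕ k) ℝ) :
    embedDer M = (fromBlocks 0 0 0 M).submatrix σ σ := by
  ext ((i | i) | (i | i)) ((j | j) | (j | j)) <;>
    simp [embedDer, fromBlocks, toBlocks₁₁, toBlocks₁₂, toBlocks₂₁, toBlocks₂₂]

lemma Jmat_sum_eq_submatrix :
    Jmat (k ⊕ k) = (fromBlocks (Jmat k) 0 0 (Jmat k)).submatrix σ σ := by
  ext ((i | i) | (i | i)) ((j | j) | (j | j)) <;>
    simp [Jmat, fromBlocks, one_apply]

lemma isSymplectic_embed {M : Matrix (k ⊕ k) (k ⊕ k) ℝ} (h : IsSymplectic M) :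
    IsSymplectic (embed M) := by
  unfold IsSymplectic at *
  rw [embed_eq_submatrix, Jmat_sum_eq_submatrix, transpose_submatrix, submatrix_mul_equiv,
    submatrix_mul_equiv]
  simp [fromBlocks_transpose, fromBlocks_multiply, h]

lemma embed_inv {M : Matrix (k ⊕ k) (k ⊕ k) ℝ} (h : IsUnit M.det) :
    (embed M)⁻¹ = embed M⁻¹ := by
  refine inv_eq_left_inv ?_
  rw [embed_eq_submatrix, embed_eq_submatrix, submatrix_mul_equiv, fromBlocks_multiply]
  simp [nonsing_inv_mul _ h]

lemma posSemidef_embedDer {P : Matrix (k ⊕ k) (k ⊕ k) ℝ} (hP : P.PosSemidef) :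
    (embedDer P).PosSemidef := by
  rw [embedDer_eq_submatrix]
  exact hP.fromBlocks_zero_zero_zero.submatrix _

lemma Psi_embed (S S' : ℝ → Matrix (k ⊕ k) (k ⊕ k) ℝ) (l : ℝ) (h : IsUnit (S l).det) :
    Psi (fun t => embed (S t)) (fun t => embedDer (S' t)) l = embedDer (Psi S S' l) := by
  simp only [Psi]
  rw [embed_inv h, Jmat_sum_eq_submatrix, embedDer_eq_submatrix, embedDer_eq_submatrix,
    embed_eq_submatrix, transpose_submatrix, submatrix_mul_equiv, submatrix_mul_equiv]
  simp [fromBlocks_transpose, fromBlocks_multiply, Matrix.mul_assoc]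

lemma Psi_inv_mul {R : Matrix (k ⊕ k) (k ⊕ k) ℝ} (hR : IsSymplectic R)
    (S S' : ℝ → Matrix (k ⊕ k) (k ⊕ k) ℝ) (l : ℝ) :
    Psi (fun t => R⁻¹ * S t) (fun t => R⁻¹ * S' t) l = Rᵀ * Psi S S' l * R := by
  simp only [Psi, Matrix.mul_inv_rev, nonsing_inv_nonsing_inv _ hR.isUnit_det_s18,
    ← Matrix.mul_assoc, hR.Jmat_transpose_mul_inv]

lemma Psi_mul_const {C : Matrix (k ⊕ k) (k ⊕ k) ℝ} (hC : IsUnit C.det)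
    (S S' : ℝ → Matrix (k ⊕ k) (k ⊕ k) ℝ) (l : ℝ) :
    Psi (fun t => S t * C) (fun t => S' t * C) l = Psi S S' l := by
  simp only [Psi, Matrix.mul_inv_rev, Matrix.mul_assoc, mul_nonsing_inv_cancel_left _ _ hC]

end Symplectic

theorem statement18_general (n : ℕ) (W W' : ℝ → Matrix (Fin n ⊕ Fin n) (Fin n ⊕ Fin n) ℝ)
    (Wh : Matrix (Fin n ⊕ Fin n) (Fin n ⊕ Fin n) ℝ)
    (hW : ∀ l, IsSymplectic (W l)) (hWh : IsSymplectic Wh) :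
    IsSymplectic (Rmat (Fin n)) ∧ (Rmat (Fin n))ᵀ * Rmat (Fin n) = 1 ∧
    (∀ l, IsSymplectic (embed (W l)) ∧
      IsSymplectic ((Rmat (Fin n))⁻¹ * embed (W l)) ∧
      IsSymplectic ((Rmat (Fin n))⁻¹ * embed (W l * Wh⁻¹) * Rmat (Fin n))) ∧
    ((∀ l, (Psi W W' l).PosSemidef) →
      ∀ l,
        (Psi (fun t => (Rmat (Fin n))⁻¹ * embed (W t))
            (fun t => (Rmat (Fin n))⁻¹ * embedDer (W' t)) l).PosSemidef ∧
        (Psi (fun t => (Rmat (Fin n))⁻¹ * embed (W t * Wh⁻¹) * Rmat (Fin n))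
            (fun t => (Rmat (Fin n))⁻¹ * embedDer (W' t * Wh⁻¹) * Rmat (Fin n)) l).PosSemidef) := by
  have hR : IsSymplectic (Rmat (Fin n)) := isSymplectic_Rmat
  have hWWh : ∀ l, IsSymplectic (W l * Wh⁻¹) := fun l => (hW l).mul_s18 hWh.inv
  refine ⟨hR, Rmat_transpose_mul_self, fun l => ⟨isSymplectic_embed (hW l),
    hR.inv.mul_s18 (isSymplectic_embed (hW l)), (hR.inv.mul_s18 (isSymplectic_embed (hWWh l))).mul_s18 hR⟩,
    fun hP l => ?_⟩
  have hcongr : ((Rmat (Fin n))ᵀ * embedDer (Psi W W' l) * Rmat (Fin n)).PosSemidef := by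
    simpa using (posSemidef_embedDer (hP l)).conjTranspose_mul_mul_same (Rmat (Fin n))
  constructor
  · rwa [Psi_inv_mul hR, Psi_embed _ _ _ (hW l).isUnit_det_s18]
  · rwa [Psi_mul_const hR.isUnit_det_s18, Psi_inv_mul hR, Psi_embed _ _ _ (hWWh l).isUnit_det_s18,
      Psi_mul_const hWh.inv.isUnit_det_s18]

/-- `R` is symplectic and orthogonal; `{I,W(λ)}`,
`𝒵(λ) = R⁻¹{I,W(λ)}` and `Ẑ(λ) = R⁻¹{I,W(λ)Ŵ⁻¹}R` are symplectic; and if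
`Ψ(W(λ)) ≥ 0` for all `λ`, then `Ψ(𝒵(λ)) ≥ 0` and `Ψ(Ẑ(λ)) ≥ 0` for all `λ`. -/
theorem statement18 (n : ℕ) (W W' : ℝ → Matrix (Fin n ⊕ Fin n) (Fin n ⊕ Fin n) ℝ)
    (Wh : Matrix (Fin n ⊕ Fin n) (Fin n ⊕ Fin n) ℝ)
    (hW : ∀ l, IsSymplectic (W l)) (hWh : IsSymplectic Wh)
    (hd : HasMatDeriv W W') :
    IsSymplectic (Rmat (Fin n)) ∧ (Rmat (Fin n))ᵀ * Rmat (Fin n) = 1 ∧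
    (∀ l, IsSymplectic (embed (W l)) ∧
      IsSymplectic ((Rmat (Fin n))⁻¹ * embed (W l)) ∧
      IsSymplectic ((Rmat (Fin n))⁻¹ * embed (W l * Wh⁻¹) * Rmat (Fin n))) ∧
    ((∀ l, (Psi W W' l).PosSemidef) →
      ∀ l,
        (Psi (fun t => (Rmat (Fin n))⁻¹ * embed (W t))
            (fun t => (Rmat (Fin n))⁻¹ * embedDer (W' t)) l).PosSemidef ∧
        (Psi (fun t => (Rmat (Fin n))⁻¹ * embed (W t * Wh⁻¹) * Rmat (Fin n))
            (fun t => (Rmat (Fin n))⁻¹ * embedDer (W' t * Wh⁻¹) * Rmat (Fin n)) l).PosSemidef) :=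
  statement18_general n W W' Wh hW hWh
end
end
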